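/- arXiv:2103.03869 — 3 statements merged into one kernel-verified Lean document; each statement's English description precedes it below -/
import Mathlib

section
/- Let n be a positive integer, x* ∈ ℝⁿ, D ⊆ ℝⁿ an open set containing x*, and f : ℝⁿ → ℝⁿ a continuous vector field with f(x*) = 0. Suppose V : ℝⁿ → ℝ is continuously differentiable on D and satisfies: (i) V(x) > V(x*) for all x ∈ D \ {x*}; (ii) the Lie derivative ∇_f V(x) < 0 for all x ∈ D \ {x*}. Then the equilibrium x* is asymptotically stable: for every ε > 0 there exists δ > 0 such that every solution x(·) of ẋ = f(x) on [0,∞) with ‖x(0) − x*‖ < δ satisfies ‖x(t) − x*‖ < ε for all t ≥ 0; and there exists r > 0 such that every solution x(·) of ẋ = f(x) on [0,∞) with ‖x(0) − x*‖ < r satisfies x(t) → x* as t → ∞. -/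
open Metric Set Filter

section Helpers

variable {n : ℕ} {xstar : EuclideanSpace ℝ (Fin n)}
  {D : Set (EuclideanSpace ℝ (Fin n))}
  {f : EuclideanSpace ℝ (Fin n) → EuclideanSpace ℝ (Fin n)}
  {V : EuclideanSpace ℝ (Fin n) → ℝ}

lemma lyap_hasDerivAt (hD : IsOpen D) (hV : ContDiffOn ℝ 1 V D)
    {x : ℝ → EuclideanSpace ℝ (Fin n)} {t : ℝ}
    (hx : HasDerivAt x (f (x t)) t) (hmem : x t ∈ D) :
    HasDerivAt (fun s => V (x s)) (fderiv ℝ V (x t) (f (x t))) t := by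
  have hdiff : DifferentiableAt ℝ V (x t) :=
    (hV.differentiableOn one_ne_zero).differentiableAt (hD.mem_nhds hmem)
  exact hdiff.hasFDerivAt.comp_hasDerivAt t hx

lemma lyap_lie_nonpos (hfeq : f xstar = 0)
    (hVlie : ∀ x ∈ D \ {xstar}, fderiv ℝ V x (f x) < 0)
    {y : EuclideanSpace ℝ (Fin n)} (hy : y ∈ D) :
    fderiv ℝ V y (f y) ≤ 0 := by
  by_cases h : y = xstar
  · subst h; simp [hfeq]
  · exact (hVlie y ⟨hy, h⟩).le

lemma lyap_antitoneOn (hD : IsOpen D) (hV : ContDiffOn ℝ 1 V D)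
    (hfeq : f xstar = 0)
    (hVlie : ∀ x ∈ D \ {xstar}, fderiv ℝ V x (f x) < 0)
    {x : ℝ → EuclideanSpace ℝ (Fin n)}
    (hsol : ∀ t ≥ (0:ℝ), HasDerivAt x (f (x t)) t)
    {s : Set ℝ} (hconv : Convex ℝ s) (hs : s ⊆ Ici 0)
    (hmaps : ∀ t ∈ s, x t ∈ D) :
    AntitoneOn (fun t => V (x t)) s := by
  have key : ∀ t ∈ s, HasDerivAt (fun u => V (x u)) (fderiv ℝ V (x t) (f (x t))) t :=
    fun t ht => lyap_hasDerivAt hD hV (hsol t (hs ht)) (hmaps t ht)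
  refine antitoneOn_of_deriv_nonpos hconv ?_ ?_ ?_
  · exact fun t ht => (key t ht).continuousAt.continuousWithinAt
  · exact fun t ht => ((key t (interior_subset ht)).differentiableAt).differentiableWithinAt
  · intro t ht
    rw [(key t (interior_subset ht)).deriv]
    exact lyap_lie_nonpos hfeq hVlie (hmaps t (interior_subset ht))

/-- Core stability lemma: solutions starting close stay within `ε`. -/
lemma lyap_stab (hn : 0 < n) (hD : IsOpen D) (hxD : xstar ∈ D)
    (hf : Continuous f) (hfeq : f xstar = 0)
    (hV : ContDiffOn ℝ 1 V D)
    (hVpos : ∀ x ∈ D \ {xstar}, V x > V xstar)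
    (hVlie : ∀ x ∈ D \ {xstar}, fderiv ℝ V x (f x) < 0)
    {ε : ℝ} (hε : 0 < ε) (hball : closedBall xstar ε ⊆ D) :
    ∃ δ > (0:ℝ), δ ≤ ε ∧ ∀ x : ℝ → EuclideanSpace ℝ (Fin n),
      (∀ t ≥ (0:ℝ), HasDerivAt x (f (x t)) t) →
      ‖x 0 - xstar‖ < δ →
      ∀ t ≥ (0:ℝ), ‖x t - xstar‖ < ε := by
  haveI : Nontrivial (EuclideanSpace ℝ (Fin n)) := by
    refine ⟨EuclideanSpace.single ⟨0, hn⟩ 1, 0, ?_⟩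
    intro h
    have := congrArg (fun v : EuclideanSpace ℝ (Fin n) => v ⟨0, hn⟩) h
    simp [EuclideanSpace.single] at this
  -- minimum of V on the sphere of radius ε
  obtain ⟨a, ha_mem, ha_min⟩ :=
    (isCompact_sphere xstar ε).exists_isMinOn
      (NormedSpace.sphere_nonempty.mpr hε.le)
      (hV.continuousOn.mono (fun y hy => hball (sphere_subset_closedBall hy)))
  have ha_ne : a ≠ xstar := by
    intro h; rw [h, mem_sphere_iff_norm, sub_self, norm_zero] at ha_mem
    exact hε.ne ha_mem
  have hm : V xstar < V a :=
    hVpos a ⟨hball (sphere_subset_closedBall ha_mem), ha_ne⟩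
  -- choose δ by continuity of V at xstar
  have hVc : ContinuousAt V xstar := hV.continuousOn.continuousAt (hD.mem_nhds hxD)
  obtain ⟨δ₁, hδ₁, hδ₁V⟩ : ∃ δ₁ > 0, ∀ y, dist y xstar < δ₁ → V y < V a := by
    have : V ⁻¹' (Iio (V a)) ∈ nhds xstar := hVc (Iio_mem_nhds hm)
    rcases Metric.mem_nhds_iff.mp this with ⟨δ₁, hδ₁, hsub⟩
    exact ⟨δ₁, hδ₁, fun y hy => hsub hy⟩
  refine ⟨min δ₁ ε, lt_min hδ₁ hε, min_le_right _ _, ?_⟩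
  intro x hsol hx0 t ht
  by_contra hcon
  push_neg at hcon
  -- the "bad" set
  set B : Set ℝ := {u | 0 ≤ u ∧ ε ≤ ‖x u - xstar‖} with hB
  have hBne : B.Nonempty := ⟨t, ht, hcon⟩
  have hBbd : BddBelow B := ⟨0, fun u hu => hu.1⟩
  have hxcont : ∀ u ≥ (0:ℝ), ContinuousAt x u := fun u hu => (hsol u hu).continuousAt
  have hBclosed : IsClosed B := by
    rw [hB]
    have : B = Ici 0 ∩ (fun u => ‖x u - xstar‖) ⁻¹' (Ici ε) := by
      ext u; simp only [hB, Set.mem_setOf_eq, Set.mem_inter_iff, Set.mem_Ici,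
        Set.mem_preimage]
    rw [← hB, this]
    apply ContinuousOn.preimage_isClosed_of_isClosed ?_ isClosed_Ici isClosed_Ici
    intro u hu
    exact (((hxcont u hu).sub continuousAt_const).norm).continuousWithinAt
  set T := sInf B with hT
  have hTB : T ∈ B := hBclosed.csInf_mem hBne hBbd
  have hT0 : 0 ≤ T := hTB.1
  have hx0' : ‖x 0 - xstar‖ < ε := lt_of_lt_of_le hx0 (min_le_right _ _)
  have hTpos : 0 < T := by
    rcases hT0.lt_or_eq with h | h
    · exact h
    · exact absurd (h ▸ hTB.2) (not_le.mpr hx0')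
  -- for s < T, s ≥ 0: strictly inside
  have hlt : ∀ s, 0 ≤ s → s < T → ‖x s - xstar‖ < ε := by
    intro s hs0 hsT
    have : s ∉ B := notMem_of_lt_csInf hsT hBbd
    by_contra h
    exact this ⟨hs0, not_lt.mp h⟩
  -- by continuity, ‖x T - xstar‖ ≤ ε
  have hTle : ‖x T - xstar‖ ≤ ε := by
    have hc : Filter.Tendsto (fun s => ‖x s - xstar‖) (nhdsWithin T (Iio T))
        (nhds ‖x T - xstar‖) :=
      (((hxcont T hT0).sub continuousAt_const).norm).continuousWithinAt
    refine le_of_tendsto hc ?_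
    filter_upwards [Ioo_mem_nhdsLT hTpos] with s hs
    exact (hlt s hs.1.le hs.2).le
  have hTeq : ‖x T - xstar‖ = ε := le_antisymm hTle hTB.2
  -- V ∘ x antitone on [0, T]
  have hmaps : ∀ s ∈ Icc (0:ℝ) T, x s ∈ D := by
    intro s hs
    rcases hs.2.lt_or_eq with h | h
    · exact hball (mem_closedBall_iff_norm.mpr (hlt s hs.1 h).le)
    · subst h; exact hball (mem_closedBall_iff_norm.mpr hTle)
  have hanti := lyap_antitoneOn hD hV hfeq hVlie hsol (convex_Icc 0 T)
    (fun u hu => hu.1) hmaps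
  have h1 : V (x T) ≤ V (x 0) :=
    hanti (left_mem_Icc.mpr hT0) ⟨hT0, le_refl T⟩ hT0
  have h2 : V (x 0) < V a := hδ₁V _ (by
    rw [dist_eq_norm]; exact lt_of_lt_of_le hx0 (min_le_left _ _))
  have h3 : V a ≤ V (x T) := ha_min (mem_sphere_iff_norm.mpr hTeq)
  linarith

/-- Core attraction lemma. -/
lemma lyap_attract (hn : 0 < n) (hD : IsOpen D) (hxD : xstar ∈ D)
    (hf : Continuous f) (hfeq : f xstar = 0)
    (hV : ContDiffOn ℝ 1 V D)
    (hVpos : ∀ x ∈ D \ {xstar}, V x > V xstar)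
    (hVlie : ∀ x ∈ D \ {xstar}, fderiv ℝ V x (f x) < 0) :
    ∃ r > (0:ℝ), ∀ x : ℝ → EuclideanSpace ℝ (Fin n),
      (∀ t ≥ (0:ℝ), HasDerivAt x (f (x t)) t) →
      ‖x 0 - xstar‖ < r →
      Filter.Tendsto (fun t => x t) Filter.atTop (nhds xstar) := by
  -- a closed ball inside D
  obtain ⟨ε₁, hε₁, hball₁⟩ := Metric.isOpen_iff.mp hD xstar hxD
  set ε₀ := ε₁ / 2 with hε₀def
  have hε₀ : 0 < ε₀ := half_pos hε₁
  have hball : closedBall xstar ε₀ ⊆ D :=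
    (closedBall_subset_ball (half_lt_self hε₁)).trans hball₁
  obtain ⟨δ₀, hδ₀, hδ₀le, hδ₀stab⟩ :=
    lyap_stab hn hD hxD hf hfeq hV hVpos hVlie hε₀ hball
  refine ⟨δ₀, hδ₀, ?_⟩
  intro x hsol hx0
  have hstay : ∀ t ≥ (0:ℝ), ‖x t - xstar‖ < ε₀ := hδ₀stab x hsol hx0
  have hmem : ∀ t ≥ (0:ℝ), x t ∈ D :=
    fun t ht => hball (mem_closedBall_iff_norm.mpr (hstay t ht).le)
  -- V ∘ x is antitone on [0, ∞)
  have hanti : AntitoneOn (fun t => V (x t)) (Ici 0) :=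
    lyap_antitoneOn hD hV hfeq hVlie hsol (convex_Ici 0) subset_rfl
      (fun t ht => hmem t ht)
  have hlower : ∀ t ≥ (0:ℝ), V xstar ≤ V (x t) := by
    intro t ht
    by_cases h : x t = xstar
    · rw [h]
    · exact (hVpos _ ⟨hmem t ht, h⟩).le
  set G : ℝ → ℝ := fun t => V (x (max t 0)) with hGdef
  have hGanti : Antitone G := by
    intro s t hst
    exact hanti (le_max_right s 0) (le_max_right t 0) (max_le_max hst le_rfl)
  have hGbdd : BddBelow (Set.range G) := by
    refine ⟨V xstar, ?_⟩
    rintro _ ⟨t, rfl⟩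
    exact hlower _ (le_max_right t 0)
  set L := ⨅ t, G t with hLdef
  have hGL : Filter.Tendsto G Filter.atTop (nhds L) := tendsto_atTop_ciInf hGanti hGbdd
  have hgL : Filter.Tendsto (fun t => V (x t)) Filter.atTop (nhds L) := by
    refine hGL.congr' ?_
    filter_upwards [eventually_ge_atTop (0:ℝ)] with t ht
    rw [hGdef]; simp only [max_eq_left ht]
  have hLlower : V xstar ≤ L :=
    le_ciInf (fun t => hlower _ (le_max_right t 0))
  have hgeL : ∀ t ≥ (0:ℝ), L ≤ V (x t) := by
    intro t ht
    have h2 : L ≤ G t := ciInf_le hGbdd t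
    have h3 : G t = V (x t) := by
      show V (x (max t 0)) = V (x t)
      rw [max_eq_left ht]
    rwa [h3] at h2
  -- the limit L must equal V xstar
  have hLeq : L = V xstar := by
    by_contra hne
    have hL : V xstar < L := hLlower.lt_of_ne (Ne.symm hne)
    -- neighborhood where V < L
    have hVc : ContinuousAt V xstar := hV.continuousOn.continuousAt (hD.mem_nhds hxD)
    obtain ⟨η, hη, hηV⟩ : ∃ η > 0, ∀ y, dist y xstar < η → V y < L := by
      have : V ⁻¹' (Iio L) ∈ nhds xstar := hVc (Iio_mem_nhds hL)
      rcases Metric.mem_nhds_iff.mp this with ⟨η, hη, hsub⟩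
      exact ⟨η, hη, fun y hy => hsub hy⟩
    have hfar : ∀ t ≥ (0:ℝ), η ≤ dist (x t) xstar := by
      intro t ht
      by_contra h
      exact absurd (hgeL t ht) (not_le.mpr (hηV _ (not_le.mp h)))
    -- compact annulus
    set K := closedBall xstar ε₀ \ ball xstar η with hKdef
    have hKcomp : IsCompact K := (isCompact_closedBall xstar ε₀).diff isOpen_ball
    have hKsub : K ⊆ D \ {xstar} := by
      rintro y ⟨hy1, hy2⟩
      refine ⟨hball hy1, ?_⟩
      intro h
      rw [Set.mem_singleton_iff] at h
      subst h
      exact hy2 (mem_ball_self hη)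
    have hKne : K.Nonempty := by
      refine ⟨x 0, mem_closedBall_iff_norm.mpr (hstay 0 le_rfl).le, ?_⟩
      simp only [mem_ball, not_lt]
      exact hfar 0 le_rfl
    -- continuous Lie derivative, bounded away from 0 on K
    have hWcont : ContinuousOn (fun y => fderiv ℝ V y (f y)) D :=
      (hV.continuousOn_fderiv_of_isOpen hD le_rfl).clm_apply hf.continuousOn
    obtain ⟨y₀, hy₀K, hy₀max⟩ :=
      hKcomp.exists_isMaxOn hKne (hWcont.mono (fun y hy => (hKsub hy).1))
    set c := -(fderiv ℝ V y₀ (f y₀)) with hcdef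
    have hc : 0 < c := neg_pos.mpr (hVlie y₀ (hKsub hy₀K))
    -- φ t = V (x t) + c t is antitone on [0, ∞)
    have hφkey : ∀ t ∈ Ici (0:ℝ),
        HasDerivAt (fun u => V (x u) + c * u) (fderiv ℝ V (x t) (f (x t)) + c) t := by
      intro t ht
      have h1 := lyap_hasDerivAt (f := f) hD hV (hsol t ht) (hmem t ht)
      have h2 : HasDerivAt (fun u : ℝ => c * u) c t := by
        simpa using (hasDerivAt_id t).const_mul c
      exact h1.add h2
    have hφanti : AntitoneOn (fun u => V (x u) + c * u) (Ici 0) := by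
      refine antitoneOn_of_deriv_nonpos (convex_Ici 0) ?_ ?_ ?_
      · exact fun t ht => (hφkey t ht).continuousAt.continuousWithinAt
      · exact fun t ht =>
          ((hφkey t (interior_subset ht)).differentiableAt).differentiableWithinAt
      · intro t ht
        rw [(hφkey t (interior_subset ht)).deriv]
        have hxtK : x t ∈ K := by
          constructor
          · exact mem_closedBall_iff_norm.mpr (hstay t (interior_subset ht)).le
          · simp only [mem_ball, not_lt]
            exact hfar t (interior_subset ht)
        have := hy₀max hxtK
        simp only [Set.mem_setOf_eq] at this
        linarith [this]
    -- linear decay contradicts boundedness below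
    have hkey : ∀ t : ℝ, 0 ≤ t → L + c * t ≤ V (x 0) := by
      intro t ht
      have hdecay : V (x t) + c * t ≤ V (x 0) + c * 0 :=
        hφanti Set.self_mem_Ici (Set.mem_Ici.mpr ht) ht
      have := hgeL t ht
      linarith
    have h0 : 0 ≤ (V (x 0) - L) / c :=
      div_nonneg (by linarith [hgeL 0 le_rfl]) hc.le
    have hlarge := hkey ((V (x 0) - L) / c + 1) (by linarith)
    have hexp : c * ((V (x 0) - L) / c + 1) = (V (x 0) - L) + c := by
      field_simp
    linarith
  -- convergence x t → xstar
  rw [Metric.tendsto_nhds]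
  intro ε hε
  rcases (closedBall xstar ε₀ \ ball xstar ε).eq_empty_or_nonempty with hA | hA
  · filter_upwards [eventually_ge_atTop (0:ℝ)] with t ht
    by_contra h
    have : x t ∈ closedBall xstar ε₀ \ ball xstar ε :=
      ⟨mem_closedBall_iff_norm.mpr (hstay t ht).le, by simpa using not_lt.mp h⟩
    rw [hA] at this
    exact this
  · set A := closedBall xstar ε₀ \ ball xstar ε with hAdef
    have hAcomp : IsCompact A := (isCompact_closedBall xstar ε₀).diff isOpen_ball
    have hAsub : A ⊆ D \ {xstar} := by
      rintro y ⟨hy1, hy2⟩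
      refine ⟨hball hy1, ?_⟩
      intro h
      rw [Set.mem_singleton_iff] at h
      subst h
      exact hy2 (mem_ball_self hε)
    obtain ⟨a, haA, hamin⟩ :=
      hAcomp.exists_isMinOn hA (hV.continuousOn.mono (fun y hy => (hAsub hy).1))
    have hLa : L < V a := hLeq ▸ hVpos a (hAsub haA)
    filter_upwards [hgL.eventually (Iio_mem_nhds hLa), eventually_ge_atTop (0:ℝ)]
      with t htV ht
    by_contra h
    have hxtA : x t ∈ A :=
      ⟨mem_closedBall_iff_norm.mpr (hstay t ht).le, by simpa using not_lt.mp h⟩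
    exact absurd (hamin hxtA) (not_le.mpr htV)

end Helpers


/-- Proposition 1 (Lyapunov function and asymptotic stability):
if `V` is continuously differentiable on an open set `D ∋ x*`, positive definite
relative to `x*` on `D`, and its Lie derivative along the continuous vector field `f`
(with `f x* = 0`) is strictly negative on `D \ {x*}`, then the equilibrium `x*` is
asymptotically stable. -/
theorem lyapunov_asymptotic_stability
    (n : ℕ) (hn : 0 < n)
    (xstar : EuclideanSpace ℝ (Fin n))
    (D : Set (EuclideanSpace ℝ (Fin n))) (hD : IsOpen D) (hxD : xstar ∈ D)
    (f : EuclideanSpace ℝ (Fin n) → EuclideanSpace ℝ (Fin n))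
    (hf : Continuous f) (hfeq : f xstar = 0)
    (V : EuclideanSpace ℝ (Fin n) → ℝ)
    (hV : ContDiffOn ℝ 1 V D)
    (hVpos : ∀ x ∈ D \ {xstar}, V x > V xstar)
    (hVlie : ∀ x ∈ D \ {xstar}, fderiv ℝ V x (f x) < 0) :
    (∀ ε > (0:ℝ), ∃ δ > (0:ℝ), ∀ x : ℝ → EuclideanSpace ℝ (Fin n),
      (∀ t ≥ (0:ℝ), HasDerivAt x (f (x t)) t) →
      ‖x 0 - xstar‖ < δ →
      ∀ t ≥ (0:ℝ), ‖x t - xstar‖ < ε) ∧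
    (∃ r > (0:ℝ), ∀ x : ℝ → EuclideanSpace ℝ (Fin n),
      (∀ t ≥ (0:ℝ), HasDerivAt x (f (x t)) t) →
      ‖x 0 - xstar‖ < r →
      Filter.Tendsto (fun t => x t) Filter.atTop (nhds xstar)) := by
  constructor
  · intro ε hε
    obtain ⟨ε₁, hε₁, hball₁⟩ := Metric.isOpen_iff.mp hD xstar hxD
    have hε' : 0 < min ε (ε₁ / 2) := lt_min hε (half_pos hε₁)
    have hball : closedBall xstar (min ε (ε₁ / 2)) ⊆ D :=
      (closedBall_subset_ball (lt_of_le_of_lt (min_le_right _ _)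
        (half_lt_self hε₁))).trans hball₁
    obtain ⟨δ, hδ, _, hstab⟩ :=
      lyap_stab hn hD hxD hf hfeq hV hVpos hVlie hε' hball
    exact ⟨δ, hδ, fun x hsol hx0 t ht =>
      lt_of_lt_of_le (hstab x hsol hx0 t ht) (min_le_left _ _)⟩
  · exact lyap_attract hn hD hxD hf hfeq hV hVpos hVlie
end

section
/- Let n be a positive integer, x* ∈ ℝⁿ, D ⊆ ℝⁿ an open set containing x*, and f : ℝⁿ → ℝⁿ a continuous vector field with f(x*) = 0. Suppose V : ℝⁿ → ℝ is continuously differentiable on D and satisfies V(x) > V(x*) for all x ∈ D \ {x*} and ∇_f V(x) ≤ 0 for all x ∈ D. Then x* is Lyapunov stable: for every ε > 0 there exists δ > 0 such that every solution x(·) of ẋ = f(x) on [0,∞) with ‖x(0) − x*‖ < δ satisfies ‖x(t) − x*‖ < ε for all t ≥ 0. -/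
/-- Stability half of Proposition 1 under the weak (nonstrict) Lie-derivative
condition: `x*` is Lyapunov stable. -/
theorem lyapunov_stability
    (n : ℕ) (hn : 0 < n)
    (xstar : EuclideanSpace ℝ (Fin n))
    (D : Set (EuclideanSpace ℝ (Fin n))) (hD : IsOpen D) (hxD : xstar ∈ D)
    (f : EuclideanSpace ℝ (Fin n) → EuclideanSpace ℝ (Fin n))
    (hf : Continuous f) (hfeq : f xstar = 0)
    (V : EuclideanSpace ℝ (Fin n) → ℝ)
    (hV : ContDiffOn ℝ 1 V D)
    (hVpos : ∀ x ∈ D \ {xstar}, V x > V xstar)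
    (hVlie : ∀ x ∈ D, fderiv ℝ V x (f x) ≤ 0) :
    ∀ ε > (0:ℝ), ∃ δ > (0:ℝ), ∀ x : ℝ → EuclideanSpace ℝ (Fin n),
      (∀ t ≥ (0:ℝ), HasDerivAt x (f (x t)) t) →
      ‖x 0 - xstar‖ < δ →
      ∀ t ≥ (0:ℝ), ‖x t - xstar‖ < ε := by
  intro ε hε
  -- choose r > 0 with closedBall xstar r ⊆ D and r < ε
  obtain ⟨r₀, hr₀, hball⟩ := Metric.isOpen_iff.mp hD xstar hxD
  set r : ℝ := min (ε / 2) (r₀ / 2) with hr_def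
  have hr : 0 < r := lt_min (by linarith) (by linarith)
  have hrε : r < ε := lt_of_le_of_lt (min_le_left _ _) (by linarith)
  have hcb : Metric.closedBall xstar r ⊆ D := by
    intro y hy
    apply hball
    have h1 : dist y xstar ≤ r := hy
    exact lt_of_le_of_lt h1 (lt_of_le_of_lt (min_le_right _ _) (by linarith))
  -- sphere is nonempty and compact
  have hVcont : ContinuousOn V D := hV.continuousOn
  have hsph_sub : Metric.sphere xstar r ⊆ D :=
    fun y hy => hcb (Metric.sphere_subset_closedBall hy)
  have hsne : (Metric.sphere xstar r).Nonempty := by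
    refine ⟨xstar + r • EuclideanSpace.single (⟨0, hn⟩ : Fin n) (1:ℝ), ?_⟩
    simp only [Metric.mem_sphere, dist_eq_norm, add_sub_cancel_left, norm_smul,
      EuclideanSpace.norm_single, norm_one, mul_one, Real.norm_eq_abs,
      abs_of_pos hr]
  obtain ⟨z, hz, hzmin⟩ :=
    (isCompact_sphere xstar r).exists_isMinOn hsne (hVcont.mono hsph_sub)
  set m : ℝ := V z with hm_def
  have hm : V xstar < m := by
    refine hVpos z ⟨hsph_sub hz, ?_⟩
    intro h
    rw [Set.mem_singleton_iff] at h
    have : dist z xstar = r := hz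
    rw [h] at this
    simp at this
    linarith
  -- choose δ by continuity of V at xstar
  have hVat : ContinuousAt V xstar := hVcont.continuousAt (hD.mem_nhds hxD)
  obtain ⟨δ₀, hδ₀, hδV⟩ := Metric.continuousAt_iff.mp hVat (m - V xstar) (by linarith)
  refine ⟨min δ₀ r, lt_min hδ₀ hr, ?_⟩
  intro x hx hx0 t ht
  have hδr : min δ₀ r ≤ r := min_le_right _ _
  have hx0r : ‖x 0 - xstar‖ < r := lt_of_lt_of_le hx0 hδr
  have hVx0 : V (x 0) < m := by
    have : dist (x 0) xstar < δ₀ := by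
      rw [dist_eq_norm]; exact lt_of_lt_of_le hx0 (min_le_left _ _)
    have := hδV this
    rw [Real.dist_eq] at this
    have := abs_lt.mp this
    linarith [this.1, this.2]
  -- continuity of x at nonnegative times
  have hxc : ∀ s : ℝ, 0 ≤ s → ContinuousAt x s := fun s hs => (hx s hs).continuousAt
  -- main claim: the solution stays in the open ball of radius r
  suffices h : ‖x t - xstar‖ < r from lt_trans h hrε
  by_contra hcon
  push_neg at hcon
  -- the set of times where the solution is outside the open ball
  set S : Set ℝ := {s : ℝ | 0 ≤ s ∧ r ≤ ‖x s - xstar‖} with hS_def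
  have hSne : S.Nonempty := ⟨t, ht, hcon⟩
  have hSbdd : BddBelow S := ⟨0, fun s hs => hs.1⟩
  have hSclosed : IsClosed S := by
    apply IsSeqClosed.isClosed
    intro u p hu hup
    have hp : 0 ≤ p := ge_of_tendsto' hup (fun i => (hu i).1)
    refine ⟨hp, ?_⟩
    have hc : ContinuousAt (fun s => ‖x s - xstar‖) p :=
      ((hxc p hp).sub continuousAt_const).norm
    exact ge_of_tendsto (hc.tendsto.comp hup) (Filter.Eventually.of_forall fun i => (hu i).2)
  set t₁ : ℝ := sInf S with ht₁_def
  have ht₁S : t₁ ∈ S := hSclosed.csInf_mem hSne hSbdd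
  have ht₁0 : 0 ≤ t₁ := ht₁S.1
  have ht₁r : r ≤ ‖x t₁ - xstar‖ := ht₁S.2
  have ht₁pos : 0 < t₁ := by
    rcases lt_or_eq_of_le ht₁0 with h | h
    · exact h
    · exfalso; rw [← h] at ht₁r; linarith
  -- before t₁ the solution is strictly inside the ball
  have hbefore : ∀ s, 0 ≤ s → s < t₁ → ‖x s - xstar‖ < r := by
    intro s hs hst
    by_contra hcon2
    push_neg at hcon2
    have : t₁ ≤ s := csInf_le hSbdd ⟨hs, hcon2⟩
    linarith
  -- the norm at t₁ is exactly r
  have ht₁le : ‖x t₁ - xstar‖ ≤ r := by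
    have hne : (nhdsWithin t₁ (Set.Ico 0 t₁)).NeBot := by
      apply mem_closure_iff_nhdsWithin_neBot.mp
      rw [closure_Ico (ne_of_lt ht₁pos)]
      exact ⟨le_of_lt ht₁pos, le_refl _⟩
    have hc : ContinuousAt (fun s => ‖x s - xstar‖) t₁ :=
      ((hxc t₁ ht₁0).sub continuousAt_const).norm
    refine le_of_tendsto ((hc.continuousWithinAt (s := Set.Ico 0 t₁)).tendsto) ?_
    filter_upwards [self_mem_nhdsWithin] with s hs
    exact le_of_lt (hbefore s hs.1 hs.2)
  have ht₁eq : ‖x t₁ - xstar‖ = r := le_antisymm ht₁le ht₁r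
  -- the trajectory on [0, t₁] stays in the closed ball, hence in D
  have htraj : ∀ s ∈ Set.Icc (0:ℝ) t₁, x s ∈ D := by
    intro s hs
    apply hcb
    rw [Metric.mem_closedBall, dist_eq_norm]
    rcases lt_or_eq_of_le hs.2 with h | h
    · exact le_of_lt (hbefore s hs.1 h)
    · rw [h, ht₁eq]
  -- V ∘ x is nonincreasing on [0, t₁]
  set g : ℝ → ℝ := fun s => V (x s) with hg_def
  have hgderiv : ∀ s ∈ Set.Ioo (0:ℝ) t₁,
      HasDerivAt g (fderiv ℝ V (x s) (f (x s))) s := by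
    intro s hs
    have hmem : x s ∈ D := htraj s ⟨le_of_lt hs.1, le_of_lt hs.2⟩
    have hVd : DifferentiableAt ℝ V (x s) :=
      ((hV.differentiableOn one_ne_zero) (x s) hmem).differentiableAt (hD.mem_nhds hmem)
    exact hVd.hasFDerivAt.comp_hasDerivAt s (hx s (le_of_lt hs.1))
  have hganti : AntitoneOn g (Set.Icc 0 t₁) := by
    apply antitoneOn_of_deriv_nonpos (convex_Icc 0 t₁)
    · intro s hs
      have hmem : x s ∈ D := htraj s hs
      have : ContinuousAt g s :=
        (hVcont.continuousAt (hD.mem_nhds hmem)).comp (hxc s hs.1)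
      exact this.continuousWithinAt
    · rw [interior_Icc]
      intro s hs
      exact (hgderiv s hs).differentiableAt.differentiableWithinAt
    · rw [interior_Icc]
      intro s hs
      rw [(hgderiv s hs).deriv]
      exact hVlie (x s) (htraj s ⟨le_of_lt hs.1, le_of_lt hs.2⟩)
  have h1 : g t₁ ≤ g 0 :=
    hganti ⟨le_refl 0, ht₁0⟩ ⟨ht₁0, le_refl t₁⟩ ht₁0
  have h2 : m ≤ g t₁ := by
    apply hzmin
    rw [Metric.mem_sphere, dist_eq_norm, ht₁eq]
  have h3 : g 0 < m := hVx0
  linarith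
end

section
/- Let m be a positive integer and let q, z, b, c ∈ ℝᵐ satisfy: Σ_{j=1}^l q_j ≥ 0 and Σ_{j=1}^l z_j ≤ 0 for every l = 1,…,m; b₁ = 0 and b_l ≤ b_{l−1} for l = 2,…,m; c₁ = 0 and c_l ≤ c_{l−1} for l = 2,…,m. Then the stacked-ReLU controller u(ω) = Σ_{j=1}^m q_j σ(ω + b_j) + Σ_{j=1}^m z_j σ(−ω + c_j), with σ(y) = max(y, 0), is monotone nondecreasing on ℝ: for all ω₁ ≤ ω₂, u(ω₁) ≤ u(ω₂). -/
private lemma step_mono' {w1 w2 x y : ℝ} (h : w1 ≤ w2) (hxy : x ≤ y) :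
    max (w2 + x) 0 - max (w1 + x) 0 ≤ max (w2 + y) 0 - max (w1 + y) 0 := by
  simp only [max_def]; split_ifs <;> linarith

private lemma abel_aux' (a d : ℕ → ℝ) (hd : ∀ j, d (j+1) ≤ d j) :
    ∀ n, (∀ l, l ≤ n → 0 ≤ ∑ j ∈ Finset.range (l+1), a j) →
    (∑ j ∈ Finset.range (n+1), a j) * d n ≤ ∑ j ∈ Finset.range (n+1), a j * d j := by
  intro n
  induction n with
  | zero => intro _; simp
  | succ n ih =>
    intro hA
    have h1 := ih (fun l hl => hA l (le_trans hl (Nat.le_succ n)))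
    rw [Finset.sum_range_succ, Finset.sum_range_succ (f := fun j => a j * d j)]
    have hAn := hA n (Nat.le_succ n)
    have h2 : (∑ j ∈ Finset.range (n+1), a j) * d (n+1)
        ≤ (∑ j ∈ Finset.range (n+1), a j) * d n :=
      mul_le_mul_of_nonneg_left (hd n) hAn
    nlinarith

private lemma abel_nonneg' (a d : ℕ → ℝ) (n : ℕ) (hd : ∀ j, d (j+1) ≤ d j) (hdn : 0 ≤ d n)
    (hA : ∀ l, l ≤ n → 0 ≤ ∑ j ∈ Finset.range (l+1), a j) :
    0 ≤ ∑ j ∈ Finset.range (n+1), a j * d j :=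
  le_trans (mul_nonneg (hA n le_rfl) hdn) (abel_aux' a d hd n hA)

private lemma iic_sum' (m : ℕ) (q : Fin m → ℝ) (l : Fin m) :
    ∑ j ∈ Finset.Iic l, q j = ∑ j ∈ Finset.range (l.val+1), (if h : j < m then q ⟨j,h⟩ else 0) := by
  apply Finset.sum_nbij' (i := fun (j : Fin m) => j.val)
      (j := fun j => if h : j < m then (⟨j, h⟩ : Fin m) else l)
  · intro x hx
    simp only [Finset.mem_Iic, Fin.le_def] at hx
    simp only [Finset.mem_range]; omega
  · intro x hx
    simp only [Finset.mem_range] at hx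
    rw [dif_pos (by omega : x < m)]
    simp only [Finset.mem_Iic, Fin.le_def]; omega
  · intro x hx; simp only [dif_pos x.isLt]
  · intro x hx
    simp only [Finset.mem_range] at hx
    rw [dif_pos (by omega : x < m)]
  · intro x hx
    simp only [dif_pos x.isLt]

/-- The stacked-ReLU controller
`u(ω) = Σ_j q_j σ(ω + b_j) + Σ_j z_j σ(−ω + c_j)` with `σ = ReLU`, under the
constraints that the partial sums of `q` are nonnegative, the partial sums of `z`
are nonpositive, `b₁ = 0`, `b` nonincreasing, `c₁ = 0`, `c` nonincreasing,
is monotone nondecreasing on `ℝ`. -/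
theorem stacked_relu_monotone
    (m : ℕ) (hm : 0 < m)
    (q z b c : Fin m → ℝ)
    (hq : ∀ l : Fin m, 0 ≤ ∑ j ∈ Finset.Iic l, q j)
    (hz : ∀ l : Fin m, ∑ j ∈ Finset.Iic l, z j ≤ 0)
    (hb0 : b ⟨0, hm⟩ = 0) (hb : Antitone b)
    (hc0 : c ⟨0, hm⟩ = 0) (hc : Antitone c)
    (u : ℝ → ℝ)
    (hu : ∀ ω : ℝ, u ω = (∑ j, q j * max (ω + b j) 0) + ∑ j, z j * max (-ω + c j) 0) :
    Monotone u := by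
  intro w1 w2 h
  rw [hu, hu]
  have hm1 : m - 1 + 1 = m := by omega
  -- q-part
  set aq : ℕ → ℝ := fun j => if hj : j < m then q ⟨j, hj⟩ else 0 with haq
  set B : ℕ → ℝ := fun j => b ⟨min j (m-1), by omega⟩ with hB
  set dq : ℕ → ℝ := fun j => max (w2 + B j) 0 - max (w1 + B j) 0 with hdq
  have hBmono : ∀ j, B (j+1) ≤ B j := by
    intro j
    exact hb (by simp only [Fin.mk_le_mk]; omega)
  have hdmono : ∀ j, dq (j+1) ≤ dq j := fun j => step_mono' h (hBmono j)
  have hd0 : 0 ≤ dq (m-1) := by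
    simp only [hdq]
    have := max_le_max (by linarith : w1 + B (m-1) ≤ w2 + B (m-1)) (le_refl (0:ℝ))
    linarith
  have hAq : ∀ l, l ≤ m - 1 → 0 ≤ ∑ j ∈ Finset.range (l+1), aq j := by
    intro l hl
    have := hq ⟨l, by omega⟩
    rwa [iic_sum'] at this
  have hQ0 : 0 ≤ ∑ j ∈ Finset.range m, aq j * dq j := by
    rw [← hm1]; exact abel_nonneg' aq dq (m-1) hdmono hd0 hAq
  have hQ : 0 ≤ (∑ j : Fin m, q j * max (w2 + b j) 0) - ∑ j : Fin m, q j * max (w1 + b j) 0 := by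
    rw [← Finset.sum_sub_distrib]
    refine le_trans hQ0 (le_of_eq ?_)
    rw [← Fin.sum_univ_eq_sum_range]
    refine Finset.sum_congr rfl fun i _ => ?_
    have hi := i.isLt
    have h1 : min (i : ℕ) (m-1) = (i : ℕ) := by omega
    simp only [haq, hdq, hB, dif_pos hi, h1, Fin.eta]
    ring
  -- z-part
  set az : ℕ → ℝ := fun j => if hj : j < m then -z ⟨j, hj⟩ else 0 with haz
  set C : ℕ → ℝ := fun j => c ⟨min j (m-1), by omega⟩ with hC
  set ez : ℕ → ℝ := fun j => max (-w1 + C j) 0 - max (-w2 + C j) 0 with hez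
  have hCmono : ∀ j, C (j+1) ≤ C j := by
    intro j
    exact hc (by simp only [Fin.mk_le_mk]; omega)
  have hemono : ∀ j, ez (j+1) ≤ ez j := fun j => step_mono' (by linarith : -w2 ≤ -w1) (hCmono j)
  have he0 : 0 ≤ ez (m-1) := by
    simp only [hez]
    have := max_le_max (by linarith : -w2 + C (m-1) ≤ -w1 + C (m-1)) (le_refl (0:ℝ))
    linarith
  have hAz : ∀ l, l ≤ m - 1 → 0 ≤ ∑ j ∈ Finset.range (l+1), az j := by
    intro l hl
    have h2 := hz ⟨l, by omega⟩
    have h3 := iic_sum' m (fun i => -z i) ⟨l, by omega⟩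
    have h4 : 0 ≤ ∑ j ∈ Finset.Iic (⟨l, by omega⟩ : Fin m), -z j := by
      rw [Finset.sum_neg_distrib]; linarith
    rw [h3] at h4
    exact h4
  have hZ0 : 0 ≤ ∑ j ∈ Finset.range m, az j * ez j := by
    rw [← hm1]; exact abel_nonneg' az ez (m-1) hemono he0 hAz
  have hZ : 0 ≤ (∑ j : Fin m, z j * max (-w2 + c j) 0) - ∑ j : Fin m, z j * max (-w1 + c j) 0 := by
    rw [← Finset.sum_sub_distrib]
    refine le_trans hZ0 (le_of_eq ?_)
    rw [← Fin.sum_univ_eq_sum_range]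
    refine Finset.sum_congr rfl fun i _ => ?_
    have hi := i.isLt
    have h1 : min (i : ℕ) (m-1) = (i : ℕ) := by omega
    simp only [haz, hez, hC, dif_pos hi, h1, Fin.eta]
    ring
  linarith
end
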